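/- Let t₀ ∈ ℝ, T ∈ (t₀, ∞], h > 0, b > 0, and let g be a nonnegative locally integrable function on ℝ satisfying (1/h)∫_t^{t+h} g(s) ds ≤ b for all t ∈ (t₀, T). Then for any a > 0 and all t ∈ [t₀, T): ∫_{t₀}^t e^{−a(t−s)} g(s) ds ≤ bh/(1 − e^{−ah}). -/

import Mathlib

/-!
Write `I t = ∫_{t₀}^t e^{-a(t-s)} g(s) ds` and `E = e^{-ah}`. Splitting the integral at `t - h`
gives `I t = E · I (t - h) + ∫_{t-h}^t e^{-a(t-s)} g(s) ds ≤ E · I (t - h) + bh`, while on the first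
window `I t ≤ ∫_{t₀}^{t₀+h} g ≤ bh`. Induction on the number of windows then keeps `I` below the
fixed point `B = bh / (1 - E)` of `x ↦ E x + bh`. The averaged bound is only assumed for
`t > t₀`; it extends to the window starting at `t₀` by continuity of `c ↦ ∫_c^{c+h} g`.
-/

open MeasureTheory intervalIntegral Set

theorem MeasureTheory.LocallyIntegrable.intervalIntegrable {E : Type*} [NormedAddCommGroup E]
    {g : ℝ → E} {μ : Measure ℝ} (hg : LocallyIntegrable g μ) (u v : ℝ) :
    IntervalIntegrable g μ u v :=
  (hg.integrableOn_isCompact isCompact_uIcc).intervalIntegrable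

theorem continuous_integral_add_right {E : Type*} [NormedAddCommGroup E] [NormedSpace ℝ E]
    {g : ℝ → E} (hg : LocallyIntegrable g volume) (h : ℝ) :
    Continuous fun c => ∫ s in c..(c + h), g s := by
  have hF := continuous_primitive hg.intervalIntegrable 0
  refine ((hF.comp (continuous_add_const h)).sub hF).congr fun c => ?_
  exact integral_interval_sub_left (hg.intervalIntegrable 0 (c + h)) (hg.intervalIntegrable 0 c)

theorem integral_add_right_le_of_forall_lt {g : ℝ → ℝ} (hg : LocallyIntegrable g volume)
    {t₀ h M : ℝ} {T : EReal}
    (hwin : ∀ c, t₀ < c → (c : EReal) < T → ∫ s in c..(c + h), g s ≤ M) :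
    ∀ c, t₀ ≤ c → (c : EReal) < T → ∫ s in c..(c + h), g s ≤ M := by
  intro c hc hcT
  obtain ⟨x, hcx, hxT⟩ := EReal.lt_iff_exists_real_btwn.1 hcT
  have hcx : c < x := EReal.coe_lt_coe_iff.1 hcx
  have hclosed := isClosed_le (continuous_integral_add_right hg h) (continuous_const (y := M))
  have hc_mem : c ∈ closure (Ioo c x) := by
    rw [closure_Ioo hcx.ne]
    exact left_mem_Icc.2 hcx.le
  refine hclosed.closure_subset_iff.2 (fun c' hc' => ?_) hc_mem
  exact hwin c' (hc.trans_lt hc'.1) ((EReal.coe_lt_coe_iff.2 hc'.2).trans hxT)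

theorem le_of_le_mul_sub_add {φ : ℝ → ℝ} {t₀ h E C B : ℝ} {T : EReal} (hh : 0 < h)
    (hE : 0 ≤ E) (hB : E * B + C ≤ B)
    (hbase : ∀ t, t₀ ≤ t → t ≤ t₀ + h → (t : EReal) < T → φ t ≤ B)
    (hstep : ∀ t, t₀ + h < t → (t : EReal) < T → φ t ≤ E * φ (t - h) + C) :
    ∀ t, t₀ ≤ t → (t : EReal) < T → φ t ≤ B := by
  have on_windows :
      ∀ n : ℕ, ∀ t, t₀ ≤ t → t ≤ t₀ + (n + 1) * h → (t : EReal) < T → φ t ≤ B := by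
    intro n
    induction n with
    | zero => simpa using hbase
    | succ n ih =>
      intro t ht htn htT
      rcases le_or_gt t (t₀ + (n + 1) * h) with hle | hgt
      · exact ih t ht hle htT
      have hn : (0 : ℝ) ≤ n := n.cast_nonneg
      have hprev : φ (t - h) ≤ B := by
        refine ih (t - h) (by nlinarith) ?_ ((EReal.coe_le_coe_iff.2 (by linarith)).trans_lt htT)
        push_cast at htn
        linarith
      calc φ t ≤ E * φ (t - h) + C := hstep t (by nlinarith) htT
        _ ≤ E * B + C := by gcongr
        _ ≤ B := hB
  intro t ht htT
  obtain ⟨n, hn⟩ := exists_nat_ge ((t - t₀) / h)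
  refine on_windows n t ht ?_ htT
  rw [div_le_iff₀ hh] at hn
  linarith

noncomputable def expWeightedIntegral (a : ℝ) (g : ℝ → ℝ) (t₀ t : ℝ) : ℝ :=
  ∫ s in t₀..t, Real.exp (-a * (t - s)) * g s

section expWeightedIntegral

variable {a : ℝ} {g : ℝ → ℝ}

theorem intervalIntegrable_exp_mul (hg : LocallyIntegrable g volume) (t u v : ℝ) :
    IntervalIntegrable (fun s => Real.exp (-a * (t - s)) * g s) volume u v :=
  (hg.intervalIntegrable u v).continuousOn_mul (by fun_prop)

theorem expWeightedIntegral_eq_exp_mul_add (hg : LocallyIntegrable g volume) (t₀ u t : ℝ) :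
    expWeightedIntegral a g t₀ t =
      Real.exp (-a * (t - u)) * expWeightedIntegral a g t₀ u + expWeightedIntegral a g u t := by
  have hshift : ∫ s in t₀..u, Real.exp (-a * (t - s)) * g s =
      Real.exp (-a * (t - u)) * expWeightedIntegral a g t₀ u := by
    rw [expWeightedIntegral, ← intervalIntegral.integral_const_mul]
    refine integral_congr fun s _ => ?_
    rw [← mul_assoc, ← Real.exp_add]
    ring_nf
  rw [← hshift, expWeightedIntegral, expWeightedIntegral,
    integral_add_adjacent_intervals (intervalIntegrable_exp_mul hg t t₀ u)
      (intervalIntegrable_exp_mul hg t u t)]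

theorem expWeightedIntegral_le_integral (ha : 0 ≤ a) (hg0 : ∀ s, 0 ≤ g s)
    (hg : LocallyIntegrable g volume) {t₀ t : ℝ} (ht : t₀ ≤ t) :
    expWeightedIntegral a g t₀ t ≤ ∫ s in t₀..t, g s := by
  refine integral_mono_on ht (intervalIntegrable_exp_mul hg t t₀ t)
    (hg.intervalIntegrable t₀ t) fun s hs => ?_
  have hexp : Real.exp (-a * (t - s)) ≤ 1 := Real.exp_le_one_iff.2 (by nlinarith [hs.2])
  exact mul_le_of_le_one_left (hg0 s) hexp

end expWeightedIntegral

theorem exp_weighted_integral_bound_general (t₀ : ℝ) (T : EReal)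
    (h b : ℝ) (hh : 0 < h) (hb : 0 < b) (g : ℝ → ℝ)
    (hg0 : ∀ s : ℝ, 0 ≤ g s) (hgloc : LocallyIntegrable g volume)
    (havg : ∀ t : ℝ, t₀ < t → (t : EReal) < T →
      (1 / h) * ∫ s in t..(t + h), g s ≤ b)
    (a : ℝ) (ha : 0 < a) :
    ∀ t : ℝ, t₀ ≤ t → (t : EReal) < T →
      ∫ s in t₀..t, Real.exp (-a * (t - s)) * g s ≤ b * h / (1 - Real.exp (-a * h)) := by
  set E := Real.exp (-a * h)
  have hE1 : 0 < 1 - E := sub_pos.2 (Real.exp_lt_one_iff.2 (by nlinarith))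
  have hwin : ∀ c, t₀ ≤ c → (c : EReal) < T → ∫ s in c..(c + h), g s ≤ b * h := by
    refine integral_add_right_le_of_forall_lt hgloc fun c hc hcT => ?_
    rw [← div_le_iff₀ hh, div_eq_inv_mul, ← one_div]
    exact havg c hc hcT
  have hbB : b * h ≤ b * h / (1 - E) :=
    le_div_self (by positivity) hE1 (by linarith [Real.exp_pos (-a * h)])
  have hfix : E * (b * h / (1 - E)) + b * h = b * h / (1 - E) := by
    field_simp
    ring
  refine le_of_le_mul_sub_add (φ := expWeightedIntegral a g t₀) (C := b * h) hh
    (Real.exp_pos _).le hfix.le (fun t ht hth htT => ?_) (fun t ht htT => ?_)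
  · calc expWeightedIntegral a g t₀ t ≤ ∫ s in t₀..t, g s :=
          expWeightedIntegral_le_integral ha.le hg0 hgloc ht
      _ ≤ ∫ s in t₀..(t₀ + h), g s :=
          integral_mono_interval le_rfl ht hth (Filter.Eventually.of_forall hg0)
            (hgloc.intervalIntegrable _ _)
      _ ≤ b * h := hwin t₀ le_rfl ((EReal.coe_le_coe_iff.2 ht).trans_lt htT)
      _ ≤ b * h / (1 - E) := hbB
  · have hsplit := expWeightedIntegral_eq_exp_mul_add (a := a) hgloc t₀ (t - h) t
    rw [sub_sub_cancel] at hsplit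
    have hlast : ∫ s in (t - h)..t, g s ≤ b * h := by
      simpa using
        hwin (t - h) (by linarith) ((EReal.coe_le_coe_iff.2 (by linarith)).trans_lt htT)
    linarith [expWeightedIntegral_le_integral ha.le hg0 hgloc (show t - h ≤ t by linarith)]

theorem exp_weighted_integral_bound (t₀ : ℝ) (T : EReal) (hT : (t₀ : EReal) < T)
    (h b : ℝ) (hh : 0 < h) (hb : 0 < b) (g : ℝ → ℝ)
    (hg0 : ∀ s : ℝ, 0 ≤ g s) (hgloc : LocallyIntegrable g volume)
    (havg : ∀ t : ℝ, t₀ < t → (t : EReal) < T →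
      (1 / h) * ∫ s in t..(t + h), g s ≤ b)
    (a : ℝ) (ha : 0 < a) :
    ∀ t : ℝ, t₀ ≤ t → (t : EReal) < T →
      ∫ s in t₀..t, Real.exp (-a * (t - s)) * g s ≤ b * h / (1 - Real.exp (-a * h)) :=
  exp_weighted_integral_bound_general t₀ T h b hh hb g hg0 hgloc havg a ha
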